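/- arXiv:2108.06993 — 3 statements merged into one kernel-verified Lean document; each statement's English description precedes it below -/
import Mathlib

section
/- Let H be a ℙ-subnormal subgroup of a finite group G and let r be the largest prime dividing the order of G. Then O_r(H) ≤ O_r(G). -/
open Subgroup
open scoped Pointwise MatrixGroups

/-- `H` is ℙ-subnormal in `G`: there is a chain of subgroups from `H` to `G`
in which each successive index is a prime or `1`. -/
def IsPSubnormal {G : Type*} [Group G] (H : Subgroup G) : Prop :=
  ∃ (n : ℕ) (c : ℕ → Subgroup G),
    c 0 = H ∧ c n = ⊤ ∧
    ∀ i < n, c i ≤ c (i + 1) ∧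
      (((c i).relIndex (c (i + 1))).Prime ∨ (c i).relIndex (c (i + 1)) = 1)

/-- The permutizer `P_G(H)`: the subgroup generated by all `x ∈ G` whose cyclic
subgroup permutes with `H`. -/
def permutizer {G : Type*} [Group G] (H : Subgroup G) : Subgroup G :=
  Subgroup.closure
    {x : G | (Subgroup.zpowers x : Set G) * (H : Set G)
           = (H : Set G) * (Subgroup.zpowers x : Set G)}

/-- `H` is permutable in `G` if `P_G(H) = G`. -/
def IsPermutable {G : Type*} [Group G] (H : Subgroup G) : Prop :=
  permutizer H = ⊤

/-- `H` is strongly permutable in `G` if `P_U(H) = U` for every `H ≤ U ≤ G`. -/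
def IsStronglyPermutable {G : Type*} [Group G] (H : Subgroup G) : Prop :=
  ∀ U : Subgroup G, H ≤ U → permutizer (H.subgroupOf U) = ⊤

/-- A group is supersoluble if it has a normal series all of whose factors are cyclic. -/
def IsSupersoluble (G : Type*) [Group G] : Prop :=
  ∃ (n : ℕ) (c : ℕ → Subgroup G) (hnorm : ∀ i, (c i).Normal),
    c 0 = ⊥ ∧ c n = ⊤ ∧
    ∀ i < n, c i ≤ c (i + 1) ∧
      (letI := hnorm i
       IsCyclic ((c (i + 1)).map (QuotientGroup.mk' (c i))))

/-- A Schmidt group: a non-nilpotent group all of whose proper subgroups are nilpotent. -/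
def IsSchmidt (G : Type*) [Group G] : Prop :=
  ¬ Group.IsNilpotent G ∧ ∀ H : Subgroup G, H ≠ ⊤ → Group.IsNilpotent H

/-- The `p`-core `O_p(G)`: the largest normal `p`-subgroup of `G` (the join of all
normal `p`-subgroups). -/
def pCore (p : ℕ) (G : Type*) [Group G] : Subgroup G :=
  ⨆ (N : Subgroup G) (_ : N.Normal) (_ : IsPGroup p N), N

/-!
If `K ≤ M` with `|M : K| = q ≤ r`, let `D` be the normal core of `K` in `M`. Then `|K : D|` divides
`(q - 1)!`, which is prime to `r`, so `O_r(K) ≤ D`. Hence `O_r(K)` is a normal `r`-subgroup of `D`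
and lies in `O_r(D)`, which is characteristic in `D ⊴ M` and therefore lies in `O_r(M)`. Every
prime index in a ℙ-subnormal chain divides `|G|`, so is at most `r`, and we climb the chain.
-/

theorem IsPGroup.le_of_not_dvd_index {p : ℕ} [Fact p.Prime] {G : Type*} [Group G]
    {P N : Subgroup G} [N.Normal] (hP : IsPGroup p P) (hN : ¬ p ∣ N.index) : P ≤ N := by
  have hcard : Nat.card (P.map (QuotientGroup.mk' N)) = 1 := by
    refine (hP.map _).card_eq_or_dvd.resolve_right fun hp => hN ?_
    exact hp.trans (N.index_eq_card ▸ card_subgroup_dvd_card _)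
  rwa [card_eq_one, Subgroup.map_eq_bot_iff, QuotientGroup.ker_mk'] at hcard

theorem Subgroup.relIndex_normalCore_dvd_factorial {G : Type*} [Group G] (H : Subgroup G)
    [H.FiniteIndex] : H.normalCore.relIndex H ∣ (H.index - 1).factorial := by
  have hindex : H.normalCore.index ∣ H.index.factorial := by
    rw [normalCore_eq_ker, index_ker, index_eq_card, ← Nat.card_perm]
    exact card_subgroup_dvd_card (MulAction.toPermHom G (G ⧸ H)).range
  rw [← relIndex_mul_index H.normalCore_le, ← Nat.mul_factorial_pred H.index_ne_zero_of_finite,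
    mul_comm H.index] at hindex
  exact Nat.dvd_of_mul_dvd_mul_right (Nat.pos_of_ne_zero H.index_ne_zero_of_finite) hindex

section PCore

variable {p : ℕ} {G : Type*} [Group G]

theorem le_pCore {N : Subgroup G} (hN : N.Normal) (hP : IsPGroup p N) : N ≤ pCore p G :=
  le_iSup_of_le N (le_iSup_of_le hN (le_iSup_of_le hP le_rfl))

theorem pCore_le {X : Subgroup G} (h : ∀ N : Subgroup G, N.Normal → IsPGroup p N → N ≤ X) :
    pCore p G ≤ X :=
  iSup_le fun N => iSup_le fun hN => iSup_le fun hP => h N hN hP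

theorem map_pCore_le_of_mulEquiv {G' : Type*} [Group G'] (e : G ≃* G') :
    (pCore p G).map e.toMonoidHom ≤ pCore p G' := by
  rw [map_le_iff_le_comap]
  refine pCore_le fun N hN hP => ?_
  rw [← map_le_iff_le_comap]
  exact le_pCore (hN.map e.toMonoidHom e.surjective) (hP.map _)

theorem map_pCore_of_mulEquiv {G' : Type*} [Group G'] (e : G ≃* G') :
    (pCore p G).map e.toMonoidHom = pCore p G' := by
  refine (map_pCore_le_of_mulEquiv e).antisymm ?_
  rw [map_equiv_eq_comap_symm', ← map_le_iff_le_comap]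
  exact map_pCore_le_of_mulEquiv e.symm

instance pCore_characteristic : (pCore p G).Characteristic :=
  characteristic_iff_map_le.mpr fun φ => (map_pCore_of_mulEquiv φ).le

theorem map_pCore_top : (pCore p (⊤ : Subgroup G)).map (⊤ : Subgroup G).subtype = pCore p G :=
  map_pCore_of_mulEquiv topEquiv

theorem pCore_isPGroup [Finite G] : IsPGroup p (pCore p G) := by
  let S : Set (Subgroup G) := {N | N.Normal ∧ IsPGroup p N}
  obtain ⟨M, ⟨hMn, hMp⟩, hmax⟩ :=
    S.toFinite.exists_maximalFor id S ⟨⊥, inferInstance, IsPGroup.of_bot⟩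
  -- `S` is closed under joins, so its maximal element is the join of all of `S`.
  suffices pCore p G = M from this ▸ hMp
  refine (pCore_le fun N hN hP => ?_).antisymm (le_pCore hMn hMp)
  have hsup : N ⊔ M ∈ S := ⟨sup_normal N M, hP.to_sup_of_normal_right hMp⟩
  exact le_sup_left.trans (hmax hsup le_sup_right)

theorem map_subtype_pCore_le_pCore [Finite G] (N : Subgroup G) [N.Normal] :
    (pCore p N).map N.subtype ≤ pCore p G :=
  le_pCore inferInstance (pCore_isPGroup.map _)

theorem le_map_subtype_pCore {P K : Subgroup G} (hPK : P ≤ K) (hKP : K ≤ normalizer (P : Set G))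
    (hP : IsPGroup p P) : P ≤ (pCore p K).map K.subtype := by
  have hPn : (P.subgroupOf K).Normal := (normal_subgroupOf_iff_le_normalizer hPK).mpr hKP
  have := map_mono (f := K.subtype) (le_pCore hPn hP.comap_subtype)
  rwa [subgroupOf_map_subtype, inf_eq_left.mpr hPK] at this

theorem le_normalizer_map_subtype_pCore (K : Subgroup G) :
    K ≤ normalizer ((pCore p K).map K.subtype : Set G) := by
  have := le_normalizer_map (H := pCore p K) K.subtype
  rwa [normalizer_eq_top, ← MonoidHom.range_eq_map, range_subtype] at this

end PCore

theorem map_subtype_pCore_le_pCore_of_index_le {p : ℕ} [Fact p.Prime] {G : Type*} [Group G]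
    [Finite G] {K : Subgroup G} (hK : K.index ≤ p) : (pCore p K).map K.subtype ≤ pCore p G := by
  let D := K.normalCore
  have hD : ¬ p ∣ (D.subgroupOf K).index := fun hp => by
    have hle := (Nat.Prime.dvd_factorial Fact.out).mp
      (hp.trans K.relIndex_normalCore_dvd_factorial)
    have hpos := (Fact.out : p.Prime).pos
    omega
  have hDK : (pCore p K).map K.subtype ≤ D := by
    have := map_mono (f := K.subtype) (pCore_isPGroup.le_of_not_dvd_index hD)
    rwa [subgroupOf_map_subtype, inf_eq_left.mpr K.normalCore_le] at this
  calc (pCore p K).map K.subtype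
      ≤ (pCore p D).map D.subtype :=
        le_map_subtype_pCore hDK (K.normalCore_le.trans (le_normalizer_map_subtype_pCore K))
          (pCore_isPGroup.map _)
    _ ≤ pCore p G := map_subtype_pCore_le_pCore D

theorem map_subtype_pCore_mono_of_relIndex_le {p : ℕ} [Fact p.Prime] {G : Type*} [Group G]
    [Finite G] {K M : Subgroup G} (hKM : K ≤ M) (hK : K.relIndex M ≤ p) :
    (pCore p K).map K.subtype ≤ (pCore p M).map M.subtype := by
  let e := subgroupOfEquivOfLe hKM
  have hsubtype : K.subtype.comp e.toMonoidHom = M.subtype.comp (K.subgroupOf M).subtype := rfl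
  rw [← map_pCore_of_mulEquiv e, map_map, hsubtype, ← map_map]
  exact map_mono (map_subtype_pCore_le_pCore_of_index_le hK)

theorem map_subtype_pCore_le_pCore_of_chain {p : ℕ} [Fact p.Prime] {G : Type*} [Group G]
    [Finite G] {n : ℕ} {c : ℕ → Subgroup G} (hcn : c n = ⊤)
    (hc : ∀ i < n, c i ≤ c (i + 1) ∧ (c i).relIndex (c (i + 1)) ≤ p) :
    (pCore p (c 0)).map (c 0).subtype ≤ pCore p G := by
  have hclimb : ∀ i ≤ n, (pCore p (c 0)).map (c 0).subtype ≤ (pCore p (c i)).map (c i).subtype := by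
    intro i hi
    induction i with
    | zero => exact le_rfl
    | succ i ih =>
      obtain ⟨hle, hindex⟩ := hc i (by omega)
      exact (ih (by omega)).trans (map_subtype_pCore_mono_of_relIndex_le hle hindex)
  have := hclimb n le_rfl
  rwa [hcn, map_pCore_top] at this

theorem statement_10_general {G : Type*} [Group G] [Finite G]
    {H : Subgroup G} (hH : IsPSubnormal H)
    {r : ℕ} (hr : r.Prime)
    (hmax : ∀ s : ℕ, s.Prime → s ∣ Nat.card G → s ≤ r) :
    (pCore r H).map H.subtype ≤ pCore r G := by
  have : Fact r.Prime := ⟨hr⟩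
  obtain ⟨n, c, rfl, hcn, hc⟩ := hH
  refine map_subtype_pCore_le_pCore_of_chain hcn fun i hi => ?_
  obtain ⟨hle, hprime | hone⟩ := hc i hi
  · exact ⟨hle, hmax _ hprime ((relIndex_dvd_card _ _).trans (card_subgroup_dvd_card _))⟩
  · exact ⟨hle, hone.le.trans hr.one_le⟩

/-- If `H` is a ℙ-subnormal subgroup of a finite group `G` and `r` is the largest
prime dividing `|G|`, then `O_r(H) ≤ O_r(G)`. -/
theorem statement_10 {G : Type*} [Group G] [Finite G]
    {H : Subgroup G} (hH : IsPSubnormal H)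
    {r : ℕ} (hr : r.Prime) (hdvd : r ∣ Nat.card G)
    (hmax : ∀ s : ℕ, s.Prime → s ∣ Nat.card G → s ≤ r) :
    (pCore r H).map H.subtype ≤ pCore r G :=
  statement_10_general hH hr hmax
end

section
/- Let N be a normal subgroup of a finite group G and let H be a subgroup of G with N ≤ H. Then H is strongly permutable in G if and only if H/N is strongly permutable in G/N. -/
open Subgroup
open scoped Pointwise MatrixGroups

/-!
Let `f : G →* G'` be surjective with `ker f ≤ H`. Then `⟨x⟩H` and `H⟨x⟩` are full preimages of
their images under `f`, so `⟨x⟩` permutes with `H` exactly when `⟨f x⟩` permutes with `f H`;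
hence `f` maps `P(H)` onto `P(f H)`, and `P(H) = G` iff `P(f H) = G'`. Applying this inside
each `U ≥ H` to the restriction `U →* f U`, and using that `U ↦ f U` is a bijection onto the
subgroups containing `f H`, gives the theorem for `G →* G/N`.
-/

namespace MonoidHom

variable {G G' : Type*} [Group G] [Group G'] {f : G →* G'} {K : Subgroup G}

lemma preimage_image_mul_coe (hK : f.ker ≤ K) (S : Set G) :
    f ⁻¹' (f '' (S * K)) = S * K := by
  refine (Set.subset_preimage_image _ _).antisymm' ?_
  rintro g ⟨_, ⟨s, hs, k, hk, rfl⟩, hg⟩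
  refine ⟨s, hs, k * ((s * k)⁻¹ * g), K.mul_mem hk (hK ?_), by group⟩
  rw [mem_ker, map_mul, map_inv, hg, inv_mul_cancel]

lemma preimage_image_coe_mul (hK : f.ker ≤ K) (S : Set G) :
    f ⁻¹' (f '' (K * S)) = K * S := by
  refine (Set.subset_preimage_image _ _).antisymm' ?_
  rintro g ⟨_, ⟨k, hk, s, hs, rfl⟩, hg⟩
  refine ⟨g * (k * s)⁻¹ * k, K.mul_mem (hK ?_) hk, s, hs, by group⟩
  rw [mem_ker, map_mul, map_inv, hg, mul_inv_cancel]

lemma zpowers_mul_map_comm_iff (hK : f.ker ≤ K) (x : G) :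
    (zpowers (f x) : Set G') * K.map f = K.map f * zpowers (f x) ↔
      (zpowers x : Set G) * K = K * zpowers x := by
  simp only [← MonoidHom.map_zpowers, coe_map, ← Set.image_mul]
  refine ⟨fun h ↦ ?_, congrArg _⟩
  rw [← preimage_image_mul_coe hK, h, preimage_image_coe_mul hK]

lemma map_permutizer (hf : Function.Surjective f) (hK : f.ker ≤ K) :
    (permutizer K).map f = permutizer (K.map f) := by
  rw [permutizer, permutizer, map_closure]
  congr 1
  refine Eq.trans ?_ (Set.image_preimage_eq _ hf)
  congr 1
  ext x
  exact (zpowers_mul_map_comm_iff hK x).symm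

end MonoidHom

namespace Subgroup

variable {G G' : Type*} [Group G] [Group G'] {f : G →* G'} {H K U : Subgroup G}

lemma coe_mul_coe_eq_right_of_le (h : K ≤ H) : (K : Set G) * H = H :=
  ((Set.mul_subset_mul_right h).trans (coe_mul_coe H).le).antisymm
    (Set.subset_mul_right _ K.one_mem)

lemma coe_mul_coe_eq_left_of_le (h : K ≤ H) : (H : Set G) * K = H :=
  ((Set.mul_subset_mul_left h).trans (coe_mul_coe H).le).antisymm
    (Set.subset_mul_left _ K.one_mem)

lemma le_permutizer : H ≤ permutizer H := fun h hh ↦ by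
  have hle : zpowers h ≤ H := zpowers_le.2 hh
  apply subset_closure
  change (zpowers h : Set G) * H = H * zpowers h
  rw [coe_mul_coe_eq_right_of_le hle, coe_mul_coe_eq_left_of_le hle]

lemma map_subgroupOf_subgroupMap (hHU : H ≤ U) :
    (H.subgroupOf U).map (f.subgroupMap U) = (H.map f).subgroupOf (U.map f) := by
  ext ⟨y, hy⟩
  simp only [mem_map, mem_subgroupOf, Subtype.ext_iff]
  exact ⟨fun ⟨u, huH, hu⟩ ↦ ⟨u, huH, hu⟩, fun ⟨h, hh, hy⟩ ↦ ⟨⟨h, hHU hh⟩, hh, hy⟩⟩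

lemma permutizer_subgroupOf_eq_top_iff (hH : f.ker ≤ H) (hHU : H ≤ U) :
    permutizer ((H.map f).subgroupOf (U.map f)) = ⊤ ↔ permutizer (H.subgroupOf U) = ⊤ := by
  have hker : (f.subgroupMap U).ker ≤ H.subgroupOf U := by
    rw [ker_subgroupMap]
    exact subgroupOf_mono U hH
  have hsurj := f.subgroupMap_surjective U
  rw [← map_subgroupOf_subgroupMap hHU, ← MonoidHom.map_permutizer hsurj hker,
    ← map_top_of_surjective _ hsurj]
  exact ⟨map_injective_of_ker_le _ (hker.trans le_permutizer) le_top, congrArg _⟩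

lemma isStronglyPermutable_map_iff (hf : Function.Surjective f) (hH : f.ker ≤ H) :
    IsStronglyPermutable (H.map f) ↔ IsStronglyPermutable H := by
  refine ⟨fun h U hHU ↦ ?_, fun h U' hU' ↦ ?_⟩
  · exact (permutizer_subgroupOf_eq_top_iff hH hHU).1 (h _ (map_mono hHU))
  · have hHU : H ≤ U'.comap f := map_le_iff_le_comap.1 hU'
    have := (permutizer_subgroupOf_eq_top_iff hH hHU).2 (h _ hHU)
    rwa [map_comap_eq_self_of_surjective hf] at this

end Subgroup

theorem statement_11_general {G : Type*} [Group G]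
    (N H : Subgroup G) [N.Normal] (hNH : N ≤ H) :
    IsStronglyPermutable H ↔ IsStronglyPermutable (H.map (QuotientGroup.mk' N)) :=
  (isStronglyPermutable_map_iff (QuotientGroup.mk'_surjective N)
    ((QuotientGroup.ker_mk' N).trans_le hNH)).symm

/-- For `N ⊴ G` and `N ≤ H ≤ G`: `H` is strongly permutable in `G` iff `H/N` is
strongly permutable in `G/N`. -/
theorem statement_11 {G : Type*} [Group G] [Finite G]
    (N H : Subgroup G) [N.Normal] (hNH : N ≤ H) :
    IsStronglyPermutable H ↔ IsStronglyPermutable (H.map (QuotientGroup.mk' N)) :=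
  statement_11_general N H hNH
end

section
/- Let G be a finite group, let r be the largest prime dividing the order of G, and let R be a Sylow r-subgroup of G. Then N_G(R) = P_G(R). In particular, if R is permutable in G, then R is normal in G. -/
open Subgroup
open scoped Pointwise MatrixGroups

/-!
If `⟨x⟩` permutes with `R`, then `U = ⟨x⟩R` is a subgroup in which the Sylow subgroup `R` has a
cyclic supplement. In such a group every Sylow `q`-subgroup with `q ≠ r` is cyclic, since
`|U : R|` divides `|⟨x⟩|`. For the smallest prime `q` dividing `|U|` (which is `< r` unless
`R = U`), Burnside's transfer theorem gives a normal `q`-complement `K ⊇ R`, and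
`K = (K ∩ ⟨x⟩) R` has the same shape. By induction `R` is normal, hence characteristic, in `K`,
so it is normal in `U` and `x` normalizes `R`.
-/

namespace Subgroup

variable {G : Type*} [Group G]

theorem coe_sup_of_mul_comm {H K : Subgroup G} (h : (H : Set G) * K = K * H) :
    ((H ⊔ K : Subgroup G) : Set G) = H * K := by
  let L : Subgroup G :=
    { carrier := H * K
      one_mem' := ⟨1, H.one_mem, 1, K.one_mem, mul_one 1⟩
      mul_mem' := fun ha hb => by
        have hL : (H : Set G) * K * (H * K) = H * K := by
          rw [mul_assoc, ← mul_assoc (K : Set G), ← h, mul_assoc, ← mul_assoc (H : Set G),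
            coe_mul_coe, coe_mul_coe]
        exact hL ▸ Set.mul_mem_mul ha hb
      inv_mem' := fun {a} ha => by
        have hL : ((H : Set G) * K)⁻¹ = H * K := by
          rw [mul_inv_rev, inv_coe_set, inv_coe_set, h]
        exact hL ▸ Set.inv_mem_inv.mpr ha }
  rw [sup_eq_closure_mul]
  change ((closure (L : Set G) : Subgroup G) : Set G) = L
  rw [closure_eq]

theorem relIndex_eq_index_of_mul_eq_univ {H K : Subgroup G}
    (h : (H : Set G) * (K : Set G) = Set.univ) : K.relIndex H = K.index := by
  have : MulAction.IsPretransitive H (G ⧸ K) := by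
    refine (MulAction.isPretransitive_iff_base ((1 : G) : G ⧸ K)).mpr
      (QuotientGroup.mk_surjective.forall.mpr fun g => ?_)
    obtain ⟨c, hc, k, hk, rfl⟩ := h ▸ Set.mem_univ g
    exact ⟨⟨c, hc⟩, QuotientGroup.eq.mpr (by simpa using hk)⟩
  have hstab : MulAction.stabilizer H ((1 : G) : G ⧸ K) = K.subgroupOf H := by
    ext k
    rw [MulAction.mem_stabilizer_iff, mem_subgroupOf]
    change (((k : G) * 1 : G) : G ⧸ K) = ((1 : G) : G ⧸ K) ↔ _
    rw [mul_one, QuotientGroup.eq, mul_one, inv_mem_iff]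
  rw [relIndex, ← hstab, MulAction.index_stabilizer_of_transitive, index]

theorem subgroupOf_mul_subgroupOf_eq_univ {H K U : Subgroup G} (hK : K ≤ U)
    (h : (U : Set G) ⊆ H * K) :
    (H.subgroupOf U : Set U) * (K.subgroupOf U : Set U) = Set.univ := by
  refine Set.eq_univ_of_forall fun u => ?_
  obtain ⟨c, hc, k, hk, e : c * k = u⟩ := h u.2
  have hcU : c ∈ U := by
    rw [← mul_inv_cancel_right c k, e]
    exact mul_mem u.2 (inv_mem (hK hk))
  exact ⟨⟨c, hcU⟩, hc, ⟨k, hK hk⟩, hk, Subtype.ext e⟩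

instance isCyclic_subgroupOf (H K : Subgroup G) [IsCyclic H] : IsCyclic (H.subgroupOf K) :=
  isCyclic_of_injective ((K.subtype.comp (H.subgroupOf K).subtype).codRestrict H fun g => g.2)
    fun _ _ hab => Subtype.ext (Subtype.ext (congrArg Subtype.val hab :))

end Subgroup

namespace Sylow

variable {G : Type*} [Group G] [Finite G] {q r : ℕ} [Fact r.Prime]

theorem exists_le_of_pow_dvd_card [Fact q.Prime] {C : Subgroup G}
    (h : q ^ (Nat.card G).factorization q ∣ Nat.card C) :
    ∃ Q : Sylow q G, (Q : Subgroup G) ≤ C := by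
  let P : Sylow q C := default
  obtain ⟨Q, hPQ⟩ := (P.isPGroup'.map C.subtype).exists_le_sylow
  have hcard : Nat.card Q ≤ Nat.card ((P : Subgroup C).map C.subtype) := by
    rw [card_map_of_injective C.subtype_injective, Q.card_eq_multiplicity]
    exact Nat.le_of_dvd Nat.card_pos (P.pow_dvd_card_of_pow_dvd_card h)
  exact ⟨Q, eq_of_le_of_card_ge hPQ hcard ▸ map_subtype_le _⟩

theorem pow_dvd_index_of_ne [Fact q.Prime] (hqr : q ≠ r) (R : Sylow r G) :
    q ^ (Nat.card G).factorization q ∣ (R : Subgroup G).index := by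
  have hcop : (q ^ (Nat.card G).factorization q).Coprime (Nat.card R) := by
    rw [R.card_eq_multiplicity]
    exact Nat.coprime_pow_primes _ _ Fact.out Fact.out hqr
  exact hcop.dvd_of_dvd_mul_left (R.card_mul_index ▸ Nat.ordProj_dvd _ q)

theorem exists_isCyclic_of_mul_eq_univ [Fact q.Prime] (hqr : q ≠ r) (R : Sylow r G)
    {C : Subgroup G} [IsCyclic C] (h : (C : Set G) * ((R : Subgroup G) : Set G) = Set.univ) :
    ∃ Q : Sylow q G, IsCyclic Q := by
  obtain ⟨Q, hQC⟩ := exists_le_of_pow_dvd_card <| (pow_dvd_index_of_ne hqr R).trans <|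
    relIndex_eq_index_of_mul_eq_univ h ▸ relIndex_dvd_card _ _
  exact ⟨Q, isCyclic_of_le hQC⟩

theorem minFac_card_prime_lt_of_index_ne_one (hmax : ∀ s : ℕ, s.Prime → s ∣ Nat.card G → s ≤ r)
    (R : Sylow r G) (hR : (R : Subgroup G).index ≠ 1) :
    (Nat.card G).minFac.Prime ∧ (Nat.card G).minFac < r := by
  have hs := Nat.minFac_prime hR
  have hsG : (R : Subgroup G).index.minFac ∣ Nat.card G :=
    (Nat.minFac_dvd _).trans (index_dvd_card _)
  have hsr : (R : Subgroup G).index.minFac ≠ r := by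
    intro h
    have hdvd := Nat.minFac_dvd (R : Subgroup G).index
    rw [h] at hdvd
    exact R.not_dvd_index hdvd
  exact ⟨Nat.minFac_prime fun h1 => hs.ne_one (Nat.dvd_one.mp (h1 ▸ hsG)),
    (Nat.minFac_le_of_dvd hs.two_le hsG).trans_lt ((hmax _ hs hsG).lt_of_ne hsr)⟩

theorem le_of_coprime_index (R : Sylow r G) {K : Subgroup G} [K.Normal]
    (h : K.index.Coprime r) : (R : Subgroup G) ≤ K := by
  have hcop : K.index.Coprime (Nat.card R) := R.card_eq_multiplicity ▸ h.pow_right _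
  exact relIndex_eq_one.mp <| Nat.eq_one_of_dvd_coprimes hcop
    (K.relIndex_dvd_index_of_normal R) (K.relIndex_dvd_card R)

theorem normal_of_isCyclic_mul_eq_univ (hmax : ∀ s : ℕ, s.Prime → s ∣ Nat.card G → s ≤ r)
    (R : Sylow r G) (C : Subgroup G) [IsCyclic C]
    (h : (C : Set G) * ((R : Subgroup G) : Set G) = Set.univ) : (R : Subgroup G).Normal := by
  induction hn : Nat.card G using Nat.strong_induction_on generalizing G with
  | _ n ih =>
  by_cases hR : (R : Subgroup G).index = 1
  · rw [index_eq_one.mp hR]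
    infer_instance
  obtain ⟨hq, hqr⟩ := R.minFac_card_prime_lt_of_index_ne_one hmax hR
  have := Fact.mk hq
  obtain ⟨Q, hQ⟩ := exists_isCyclic_of_mul_eq_univ hqr.ne R h
  set K := (MonoidHom.transferSylow Q (hQ.normalizer_le_centralizer rfl)).ker
  have hKQ : K.IsComplement' Q := hQ.isComplement' rfl
  have hRK : (R : Subgroup G) ≤ K := R.le_of_coprime_index <| by
    rw [hKQ.symm.index_eq_card, Q.card_eq_multiplicity]
    exact ((Nat.coprime_primes hq Fact.out).mpr hqr.ne).pow_left _
  have hKG : Nat.card K < n := by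
    have hK : K ≠ ⊤ := fun hK =>
      Q.ne_bot_of_dvd_card (Nat.minFac_dvd _) (isComplement'_top_left.mp (hK ▸ hKQ))
    exact hn ▸ (card_le_card_group K).lt_of_ne (card_eq_iff_eq_top K |>.not.mpr hK)
  have hRK_normal : (R.subtype hRK : Subgroup K).Normal :=
    ih _ hKG (fun s hs hsK => hmax s hs (hsK.trans (card_subgroup_dvd_card K))) (R.subtype hRK)
      (C.subgroupOf K) (subgroupOf_mul_subgroupOf_eq_univ hRK (h ▸ Set.subset_univ _)) rfl
  have := characteristic_of_normal _ hRK_normal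
  have hmap : (R.subtype hRK : Subgroup K).map K.subtype = R := by
    rw [coe_subtype, subgroupOf_map_subtype, inf_eq_left.mpr hRK]
  exact hmap ▸ inferInstance

theorem mem_normalizer_of_zpowers_mul_comm (hmax : ∀ s : ℕ, s.Prime → s ∣ Nat.card G → s ≤ r)
    (R : Sylow r G) {x : G}
    (hx : (zpowers x : Set G) * (R : Subgroup G) = (R : Subgroup G) * (zpowers x : Set G)) :
    x ∈ normalizer ((R : Subgroup G) : Set G) := by
  set U := zpowers x ⊔ (R : Subgroup G)
  have hRU : (R : Subgroup G) ≤ U := le_sup_right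
  have hnormal : ((R : Subgroup G).subgroupOf U).Normal := by
    rw [← coe_subtype R hRU]
    exact (R.subtype hRU).normal_of_isCyclic_mul_eq_univ
      (fun s hs hsU => hmax s hs (hsU.trans (card_subgroup_dvd_card U))) ((zpowers x).subgroupOf U)
      (subgroupOf_mul_subgroupOf_eq_univ hRU (coe_sup_of_mul_comm hx).subset)
  exact le_normalizer_of_normal_subgroupOf hRU (mem_sup_left (mem_zpowers x))

theorem normalizer_eq_permutizer (hmax : ∀ s : ℕ, s.Prime → s ∣ Nat.card G → s ≤ r)
    (R : Sylow r G) : normalizer ((R : Subgroup G) : Set G) = permutizer (R : Subgroup G) := by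
  refine le_antisymm (fun x hx => Subgroup.subset_closure ?_)
    ((closure_le _).mpr fun _ hx => R.mem_normalizer_of_zpowers_mul_comm hmax hx)
  exact set_mul_normalizer_comm _ _ (SetLike.coe_subset_coe.mpr (zpowers_le.mpr hx))

end Sylow

theorem statement_13_general {G : Type*} [Group G] [Finite G]
    {r : ℕ} (hr : r.Prime)
    (hmax : ∀ s : ℕ, s.Prime → s ∣ Nat.card G → s ≤ r)
    (R : Sylow r G) :
    Subgroup.normalizer ((R : Subgroup G) : Set G) = permutizer (R : Subgroup G) ∧
      (IsPermutable (R : Subgroup G) → (R : Subgroup G).Normal) := by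
  have := Fact.mk hr
  have hR := R.normalizer_eq_permutizer hmax
  exact ⟨hR, fun hperm => normalizer_eq_top_iff.mp (hR.trans hperm)⟩

/-- If `r` is the largest prime dividing `|G|` and `R` is a Sylow `r`-subgroup of a
finite group `G`, then `N_G(R) = P_G(R)`; in particular, if `R` is permutable in `G`,
then `R` is normal in `G`. -/
theorem statement_13 {G : Type*} [Group G] [Finite G]
    {r : ℕ} (hr : r.Prime) (hdvd : r ∣ Nat.card G)
    (hmax : ∀ s : ℕ, s.Prime → s ∣ Nat.card G → s ≤ r)
    (R : Sylow r G) :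
    Subgroup.normalizer ((R : Subgroup G) : Set G) = permutizer (R : Subgroup G) ∧
      (IsPermutable (R : Subgroup G) → (R : Subgroup G).Normal) :=
  statement_13_general hr hmax R
end
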